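/- arXiv:2410.06612 — 8 statements merged into one kernel-verified Lean document; each statement's English description precedes it below -/
import Mathlib

section
/- For every n × n bistochastic matrix A, the squared Frobenius norm is at most the maximal trace: ∑_{i,j=1}^{n} A_{i,j}² ≤ max_{σ ∈ S_n} ∑_{i=1}^{n} A_{i,σ(i)} (the Marcus–Ree inequality). -/
open Matrix BigOperators

/-- An `n × n` real matrix is bistochastic (doubly stochastic) if all entries are
nonnegative and every row and every column sums to `1`. -/
def IsBistochastic {n : ℕ} (A : Matrix (Fin n) (Fin n) ℝ) : Prop :=
  (∀ i j, 0 ≤ A i j) ∧ (∀ i, ∑ j, A i j = 1) ∧ (∀ j, ∑ i, A i j = 1)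

/-- The maximal trace `maxTr A = max_{σ ∈ S_n} ∑ i, A i (σ i)`. -/
noncomputable def maxTr {n : ℕ} (A : Matrix (Fin n) (Fin n) ℝ) : ℝ :=
  ⨆ σ : Equiv.Perm (Fin n), ∑ i, A i (σ i)

/-- The squared Frobenius norm `‖A‖_F² = ∑ i j, (A i j)²`. -/
def frobSq {n : ℕ} (A : Matrix (Fin n) (Fin n) ℝ) : ℝ :=
  ∑ i, ∑ j, (A i j) ^ 2

/-- Marcus–Ree inequality. -/
theorem marcus_ree {n : ℕ} (A : Matrix (Fin n) (Fin n) ℝ) (hA : IsBistochastic A) :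
    frobSq A ≤ maxTr A := by
  have hmem : A ∈ doublyStochastic ℝ (Fin n) :=
    mem_doublyStochastic_iff_sum.mpr ⟨hA.1, hA.2.1, hA.2.2⟩
  obtain ⟨w, hw0, hw1, hwA⟩ := exists_eq_sum_perm_of_mem_doublyStochastic hmem
  have hle : ∀ σ : Equiv.Perm (Fin n), ∑ i, A i (σ i) ≤ maxTr A := fun σ =>
    le_ciSup (f := fun σ : Equiv.Perm (Fin n) => ∑ i, A i (σ i))
      (Set.Finite.bddAbove (Set.finite_range _)) σ
  have key : frobSq A = ∑ σ : Equiv.Perm (Fin n), w σ * ∑ i, A i (σ i) := by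
    unfold frobSq
    have : ∀ i j, A i j = ∑ σ : Equiv.Perm (Fin n), w σ * (σ.permMatrix ℝ) i j := by
      intro i j
      rw [← hwA]
      simp [Matrix.sum_apply, mul_ite, mul_one, mul_zero]
    calc ∑ i, ∑ j, (A i j)^2
        = ∑ i, ∑ j, (∑ σ : Equiv.Perm (Fin n), w σ * (σ.permMatrix ℝ) i j) * A i j := by
          refine Finset.sum_congr rfl fun i _ => Finset.sum_congr rfl fun j _ => ?_
          rw [← this i j]; ring
      _ = ∑ σ : Equiv.Perm (Fin n), w σ * ∑ i, ∑ j, (σ.permMatrix ℝ) i j * A i j := by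
          simp_rw [Finset.sum_mul, Finset.mul_sum, mul_assoc]
          rw [Finset.sum_congr rfl fun i _ => Finset.sum_comm, Finset.sum_comm]
      _ = ∑ σ : Equiv.Perm (Fin n), w σ * ∑ i, A i (σ i) := by
          refine Finset.sum_congr rfl fun σ _ => ?_
          congr 1
          refine Finset.sum_congr rfl fun i _ => ?_
          simp [Equiv.Perm.permMatrix, PEquiv.toMatrix_apply, Equiv.toPEquiv_apply,
            Finset.sum_ite_eq, mul_ite]
  rw [key]
  calc ∑ σ : Equiv.Perm (Fin n), w σ * ∑ i, A i (σ i)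
      ≤ ∑ σ : Equiv.Perm (Fin n), w σ * maxTr A :=
        Finset.sum_le_sum fun σ _ => mul_le_mul_of_nonneg_left (hle σ) (hw0 σ)
    _ = maxTr A := by rw [← Finset.sum_mul, hw1, one_mul]
end

section
/- For every n ≥ 1, the set of n × n Erdős matrices is finite; more precisely, its cardinality is at most ∑_{j=1}^{(n-1)²+1} C(n!, j), where C(a,b) denotes the binomial coefficient. -/
open Matrix BigOperators

/-- A bistochastic matrix is an Erdős matrix if `‖A‖_F² = maxTr A`. -/
def IsErdos {n : ℕ} (A : Matrix (Fin n) (Fin n) ℝ) : Prop :=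
  IsBistochastic A ∧ frobSq A = maxTr A

/-!
By Birkhoff's and Carathéodory's theorems an Erdős matrix `A` is a convex combination, with
positive weights, of affinely independent permutation matrices `P_σ`, `σ ∈ S`. They lie in the
affine space of matrices with all line sums `1`, of dimension `(n - 1)²`, so
`1 ≤ |S| ≤ (n - 1)² + 1`. For the Frobenius inner product `⟪X, Y⟫ = tr (Xᵀ Y)` we have
`⟪A, P_σ⟫ = ∑ᵢ A i (σ i) ≤ maxTr A = ⟪A, A⟫`, and `⟪A, A⟫` is the weighted average of the
`⟪A, P_σ⟫`, so equality holds on `S`. This determines `A` from `S`: if `B` has the same property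
then `⟪A, B⟫ = ⟪A, A⟫` and `⟪B, A⟫ = ⟪B, B⟫`, whence `‖A - B‖² = 0`.
-/

open Finset in
theorem LinearMap.apply_eq_of_apply_le_of_sum_smul_eq {E ι : Type*} [AddCommGroup E]
    [Module ℝ E] [Fintype ι] (f : E →ₗ[ℝ] ℝ) {z : ι → E} {w : ι → ℝ} {x : E} (hw₀ : ∀ i, 0 < w i)
    (hw₁ : ∑ i, w i = 1) (hx : ∑ i, w i • z i = x) (hle : ∀ i, f (z i) ≤ f x) (i : ι) :
    f (z i) = f x := by
  have hsum : ∑ j, w j * (f x - f (z j)) = 0 :=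
    calc ∑ j, w j * (f x - f (z j)) = (∑ j, w j) * f x - f (∑ j, w j • z j) := by
          simp [mul_sub, sum_mul, map_sum]
      _ = 0 := by rw [hw₁, hx, one_mul, sub_self]
  have := (sum_eq_zero_iff_of_nonneg fun j _ =>
    mul_nonneg (hw₀ j).le (sub_nonneg.2 (hle j))).1 hsum i (mem_univ i)
  linarith [(mul_eq_zero.1 this).resolve_left (hw₀ i).ne']

namespace Matrix

section FrobeniusInner

variable {m : Type*} [Fintype m]

theorem trace_transpose_mul_eq_of_mem_convexHull {t : Set (Matrix m m ℝ)} {A X : Matrix m m ℝ}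
    {c : ℝ} (hX : X ∈ convexHull ℝ t) (ht : ∀ P ∈ t, (Aᵀ * P).trace = c) :
    (Aᵀ * X).trace = c :=
  convexHull_min ht
    (convex_hyperplane ((traceLinearMap m ℝ ℝ).comp (LinearMap.mulLeft ℝ Aᵀ)).isLinear c) hX

theorem eq_of_mem_convexHull_of_trace_transpose_mul_eq {t : Set (Matrix m m ℝ)}
    {A B : Matrix m m ℝ} (hA : A ∈ convexHull ℝ t) (hB : B ∈ convexHull ℝ t)
    (hAt : ∀ P ∈ t, (Aᵀ * P).trace = (Aᵀ * A).trace)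
    (hBt : ∀ P ∈ t, (Bᵀ * P).trace = (Bᵀ * B).trace) : A = B := by
  have hAB := trace_transpose_mul_eq_of_mem_convexHull hB hAt
  have hBA := trace_transpose_mul_eq_of_mem_convexHull hA hBt
  have hsymm : (Bᵀ * A).trace = (Aᵀ * B).trace := by
    rw [← trace_transpose, transpose_mul, transpose_transpose]
  have : ((A - B)ᴴ * (A - B)).trace = 0 := by
    simp only [conjTranspose_eq_transpose_of_trivial, transpose_sub, sub_mul, mul_sub,
      trace_sub]
    linarith
  exact sub_eq_zero.1 (trace_conjTranspose_mul_self_eq_zero_iff.1 this)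

theorem trace_transpose_mul_permMatrix [DecidableEq m] (A : Matrix m m ℝ) (σ : Equiv.Perm m) :
    (Aᵀ * σ.permMatrix ℝ).trace = ∑ i, A i (σ i) := by
  rw [trace_mul_comm, PEquiv.toMatrix_toPEquiv_mul]
  simp [trace]

theorem trace_transpose_mul_self (A : Matrix m m ℝ) :
    (Aᵀ * A).trace = ∑ i, ∑ j, A i j ^ 2 := by
  simp only [trace, diag, mul_apply, transpose_apply, sq]
  exact Finset.sum_comm

end FrobeniusInner

def lineSumsZero (R m n : Type*) [Ring R] [Fintype m] [Fintype n] :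
    Submodule R (Matrix m n R) where
  carrier := {M | (∀ i, ∑ j, M i j = 0) ∧ ∀ j, ∑ i, M i j = 0}
  add_mem' := by
    rintro M N ⟨hM₁, hM₂⟩ ⟨hN₁, hN₂⟩
    exact ⟨fun i => by simp [Finset.sum_add_distrib, hM₁, hN₁],
      fun j => by simp [Finset.sum_add_distrib, hM₂, hN₂]⟩
  zero_mem' := ⟨fun _ => by simp, fun _ => by simp⟩
  smul_mem' := by
    rintro c M ⟨hM₁, hM₂⟩
    exact ⟨fun i => by simp [← Finset.mul_sum, hM₁], fun j => by simp [← Finset.mul_sum, hM₂]⟩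

theorem vectorSpan_doublyStochastic_le {R m : Type*} [Ring R] [PartialOrder R] [IsOrderedRing R]
    [Fintype m] [DecidableEq m] :
    vectorSpan R (doublyStochastic R m : Set (Matrix m m R)) ≤ lineSumsZero R m m := by
  refine Submodule.span_le.2 ?_
  rintro _ ⟨M, hM, N, hN, rfl⟩
  rw [SetLike.mem_coe, mem_doublyStochastic_iff_sum] at hM hN
  exact ⟨fun i => by simp [Finset.sum_sub_distrib, hM.2.1, hN.2.1],
    fun j => by simp [Finset.sum_sub_distrib, hM.2.2, hN.2.2]⟩

theorem eq_zero_of_mem_lineSumsZero_of_submatrix_castSucc {R : Type*} [Ring R] {k : ℕ}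
    {M : Matrix (Fin (k + 1)) (Fin (k + 1)) R}
    (hM : M ∈ lineSumsZero R (Fin (k + 1)) (Fin (k + 1)))
    (hblock : M.submatrix Fin.castSucc Fin.castSucc = 0) : M = 0 := by
  obtain ⟨hrow, hcol⟩ := hM
  have hblock' (i j : Fin k) : M i.castSucc j.castSucc = 0 := congrFun (congrFun hblock i) j
  have hlastCol (i : Fin k) : M i.castSucc (Fin.last k) = 0 := by
    simpa [Fin.sum_univ_castSucc, hblock'] using hrow i.castSucc
  have hlastRow (j : Fin k) : M (Fin.last k) j.castSucc = 0 := by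
    simpa [Fin.sum_univ_castSucc, hblock'] using hcol j.castSucc
  have hcorner : M (Fin.last k) (Fin.last k) = 0 := by
    simpa [Fin.sum_univ_castSucc, hlastRow] using hrow (Fin.last k)
  ext i j
  induction i using Fin.lastCases <;> induction j using Fin.lastCases <;> simp [*]

theorem finrank_lineSumsZero_le {K : Type*} [Field K] (n : ℕ) :
    Module.finrank K (lineSumsZero K (Fin n) (Fin n)) ≤ (n - 1) ^ 2 := by
  cases n with
  | zero => simp [Module.finrank_zero_of_subsingleton]
  | succ k =>
    let corner : lineSumsZero K (Fin (k + 1)) (Fin (k + 1)) →ₗ[K] Matrix (Fin k) (Fin k) K :=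
      { toFun := fun M => (M : Matrix _ _ K).submatrix Fin.castSucc Fin.castSucc
        map_add' := fun _ _ => rfl
        map_smul' := fun _ _ => rfl }
    have hcorner : Function.Injective corner := by
      rw [← LinearMap.ker_eq_bot, LinearMap.ker_eq_bot']
      exact fun M hM => Subtype.ext (eq_zero_of_mem_lineSumsZero_of_submatrix_castSucc M.2 hM)
    simpa [sq, Module.finrank_matrix] using LinearMap.finrank_le_finrank_of_injective hcorner

end Matrix

theorem AffineIndependent.card_le_of_range_subset_doublyStochastic {ι : Type*} [Fintype ι]
    {n : ℕ} {z : ι → Matrix (Fin n) (Fin n) ℝ} (hz : AffineIndependent ℝ z)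
    (hzS : Set.range z ⊆ doublyStochastic ℝ (Fin n)) : Fintype.card ι ≤ (n - 1) ^ 2 + 1 := by
  have hspan := (vectorSpan_mono ℝ hzS).trans vectorSpan_doublyStochastic_le
  exact hz.card_le_finrank_succ.trans <| Nat.add_le_add_right
    ((Submodule.finrank_mono hspan).trans (finrank_lineSumsZero_le n)) 1

open Finset in
theorem Finset.card_filter_card_mem {α : Type*} [Fintype α] (s : Finset ℕ) :
    #{S : Finset α | #S ∈ s} = ∑ j ∈ s, (Fintype.card α).choose j := by
  classical
  rw [card_eq_sum_card_fiberwise (f := card) (s := {S : Finset α | #S ∈ s}) (t := s)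
    fun S hS => by simpa using hS]
  refine sum_congr rfl fun j hj => ?_
  rw [← card_univ, ← card_powersetCard]
  congr 1
  ext S
  simp only [mem_filter, mem_univ, true_and, mem_powersetCard, subset_univ]
  exact ⟨And.right, fun h => ⟨h ▸ hj, h⟩⟩

theorem sum_apply_perm_le_maxTr {n : ℕ} (A : Matrix (Fin n) (Fin n) ℝ) (σ : Equiv.Perm (Fin n)) :
    ∑ i, A i (σ i) ≤ maxTr A :=
  le_ciSup (f := fun σ : Equiv.Perm (Fin n) => ∑ i, A i (σ i)) (Set.finite_range _).bddAbove σ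

open Finset in
theorem IsErdos.exists_finset_perm_mem_convexHull {n : ℕ} {A : Matrix (Fin n) (Fin n) ℝ}
    (hA : IsErdos A) :
    ∃ S : Finset (Equiv.Perm (Fin n)), S.card ∈ Icc 1 ((n - 1) ^ 2 + 1) ∧
      A ∈ convexHull ℝ ((fun σ : Equiv.Perm (Fin n) => σ.permMatrix ℝ) '' S) ∧
      ∀ P ∈ (fun σ : Equiv.Perm (Fin n) => σ.permMatrix ℝ) '' S,
        (Aᵀ * P).trace = (Aᵀ * A).trace := by
  obtain ⟨hbist, hfrob⟩ := hA
  have hconv : A ∈ convexHull ℝ (Set.range fun σ : Equiv.Perm (Fin n) => σ.permMatrix ℝ) :=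
    doublyStochastic_eq_convexHull_permMatrix (R := ℝ) (n := Fin n) ▸
      mem_doublyStochastic_iff_sum.2 hbist
  obtain ⟨ι, _, z, w, hzP, hz, hw₀, hw₁, hwz⟩ := eq_pos_convex_span_of_mem_convexHull hconv
  choose τ hτ using fun i => hzP (Set.mem_range_self i)
  have hrange :
      (fun σ : Equiv.Perm (Fin n) => σ.permMatrix ℝ) '' ↑(univ.image τ) = Set.range z := by
    rw [coe_image, coe_univ, Set.image_univ, ← Set.range_comp]
    exact congrArg Set.range (funext hτ)
  have : Nonempty ι := by
    by_contra h
    simp [not_nonempty_iff.1 h] at hw₁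
  refine ⟨univ.image τ, mem_Icc.2 ⟨card_pos.2 (univ_nonempty.image τ), ?_⟩, ?_, ?_⟩
  · refine card_image_le.trans (hz.card_le_of_range_subset_doublyStochastic (hzP.trans ?_))
    rintro _ ⟨σ, rfl⟩
    exact permMatrix_mem_doublyStochastic
  · rw [hrange]
    exact mem_convexHull_of_exists_fintype w z (fun i => (hw₀ i).le) hw₁ Set.mem_range_self hwz
  · rw [hrange]
    rintro _ ⟨i, rfl⟩
    refine ((traceLinearMap _ ℝ ℝ).comp (LinearMap.mulLeft ℝ Aᵀ))
      |>.apply_eq_of_apply_le_of_sum_smul_eq hw₀ hw₁ hwz (fun j => ?_) i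
    change (Aᵀ * z j).trace ≤ (Aᵀ * A).trace
    rw [← hτ j, trace_transpose_mul_permMatrix, trace_transpose_mul_self]
    exact (sum_apply_perm_le_maxTr A (τ j)).trans hfrob.ge

theorem finitely_many_erdos_general (n : ℕ) :
    {A : Matrix (Fin n) (Fin n) ℝ | IsErdos A}.Finite ∧
    {A : Matrix (Fin n) (Fin n) ℝ | IsErdos A}.ncard ≤
      ∑ j ∈ Finset.Icc 1 ((n - 1) ^ 2 + 1), (Nat.factorial n).choose j := by
  choose! S hS_card hS_hull hS_face using fun (A : Matrix (Fin n) (Fin n) ℝ) (hA : IsErdos A) =>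
    hA.exists_finset_perm_mem_convexHull
  let T : Finset (Finset (Equiv.Perm (Fin n))) := {S | S.card ∈ Finset.Icc 1 ((n - 1) ^ 2 + 1)}
  have hmaps : Set.MapsTo S {A | IsErdos A} ↑T := fun A hA => by
    simpa [T] using hS_card A hA
  have hinj : Set.InjOn S {A | IsErdos A} := fun A hA B hB hAB =>
    eq_of_mem_convexHull_of_trace_transpose_mul_eq (hS_hull A hA) (hAB ▸ hS_hull B hB)
      (hS_face A hA) (hAB ▸ hS_face B hB)
  refine ⟨Set.Finite.of_injOn hmaps hinj T.finite_toSet, ?_⟩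
  calc {A | IsErdos A}.ncard ≤ (T : Set (Finset (Equiv.Perm (Fin n)))).ncard :=
        Set.ncard_le_ncard_of_injOn S hmaps hinj
    _ = _ := by rw [Set.ncard_coe_finset, Finset.card_filter_card_mem, Fintype.card_perm,
        Fintype.card_fin]

/-- For every `n ≥ 1` there are only finitely many `n × n` Erdős matrices; more precisely,
their number is at most `∑_{j=1}^{(n-1)²+1} C(n!, j)`. -/
theorem finitely_many_erdos (n : ℕ) (hn : 1 ≤ n) :
    {A : Matrix (Fin n) (Fin n) ℝ | IsErdos A}.Finite ∧
    {A : Matrix (Fin n) (Fin n) ℝ | IsErdos A}.ncard ≤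
      ∑ j ∈ Finset.Icc 1 ((n - 1) ^ 2 + 1), (Nat.factorial n).choose j :=
  finitely_many_erdos_general n
end

section
/- Let A = ∑_{i=1}^{m} x_i P_i be an n × n bistochastic matrix, where P_1, …, P_m are n × n permutation matrices, x_i > 0 for all i, and ∑_{i=1}^{m} x_i = 1. Let M ∈ ℝ^{m×m} be the matrix with entries M_{i,j} = ⟨P_i, P_j⟩_F. If A is an Erdős matrix, then the vector x = (x_1, …, x_m)ᵀ satisfies M x = ⟨M x, x⟩ 𝟙_m, where 𝟙_m ∈ ℝ^m is the all-ones vector and ⟨·,·⟩ is the standard inner product on ℝ^m. -/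
open Matrix BigOperators

/-- The Frobenius inner product `⟨A, B⟩_F = Tr (A Bᵀ)`. -/
def frobInner {n : ℕ} (A B : Matrix (Fin n) (Fin n) ℝ) : ℝ :=
  Matrix.trace (A * Bᵀ)

/-- `P` is a permutation matrix. -/
def IsPermMatrix {n : ℕ} (P : Matrix (Fin n) (Fin n) ℝ) : Prop :=
  ∃ σ : Equiv.Perm (Fin n), P = σ.permMatrix ℝ

lemma frobInner_eq_sum {n : ℕ} (A B : Matrix (Fin n) (Fin n) ℝ) :
    frobInner A B = ∑ i, ∑ j, A i j * B i j := by
  simp [frobInner, Matrix.trace, Matrix.diag, Matrix.mul_apply]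

lemma frobInner_perm {n : ℕ} (σ : Equiv.Perm (Fin n)) (B : Matrix (Fin n) (Fin n) ℝ) :
    frobInner (σ.permMatrix ℝ) B = ∑ k, B k (σ k) := by
  rw [frobInner_eq_sum]
  refine Finset.sum_congr rfl fun k _ => ?_
  rw [Finset.sum_eq_single (σ k)]
  · simp [Equiv.Perm.permMatrix, PEquiv.toMatrix_apply, Equiv.toPEquiv_apply]
  · intro j _ hj
    simp [Equiv.Perm.permMatrix, PEquiv.toMatrix_apply, Equiv.toPEquiv_apply, Ne.symm hj]
  · simp


lemma frobInner_sum_smul_right {n N : ℕ} (B : Matrix (Fin n) (Fin n) ℝ)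
    (x : Fin N → ℝ) (C : Fin N → Matrix (Fin n) (Fin n) ℝ) :
    frobInner B (∑ j, x j • C j) = ∑ j, x j * frobInner B (C j) := by
  simp [frobInner, Matrix.transpose_sum, Matrix.mul_sum, Matrix.transpose_smul,
    Matrix.mul_smul, Matrix.trace_smul, smul_eq_mul]

lemma frobInner_sum_smul_left {n N : ℕ} (B : Matrix (Fin n) (Fin n) ℝ)
    (x : Fin N → ℝ) (C : Fin N → Matrix (Fin n) (Fin n) ℝ) :
    frobInner (∑ j, x j • C j) B = ∑ j, x j * frobInner (C j) B := by
  simp [frobInner, Matrix.sum_mul, Matrix.smul_mul, Matrix.trace_smul, smul_eq_mul]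

/-- If `A = ∑ x i • P i` is an Erdős matrix, where the `P i` are permutation matrices,
`x i > 0` and `∑ x i = 1`, then `M x = ⟨M x, x⟩ 𝟙` where `M i j = ⟨P i, P j⟩_F`. -/
theorem erdos_gram_equation {n m : ℕ} (P : Fin m → Matrix (Fin n) (Fin n) ℝ)
    (hP : ∀ i, IsPermMatrix (P i)) (x : Fin m → ℝ) (hx : ∀ i, 0 < x i)
    (hsum : ∑ i, x i = 1) (A : Matrix (Fin n) (Fin n) ℝ) (hA : A = ∑ i, x i • P i)
    (hErdos : IsErdos A)
    (M : Matrix (Fin m) (Fin m) ℝ) (hM : ∀ i j, M i j = frobInner (P i) (P j)) :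
    M *ᵥ x = fun _ => (M *ᵥ x) ⬝ᵥ x := by
  -- (Mx)_i = frobInner (P i) A
  have hle0 : ∀ i, frobInner (P i) A ≤ maxTr A := by
    intro i
    obtain ⟨σ, hσ⟩ := hP i
    rw [hσ, frobInner_perm, maxTr]
    exact le_ciSup (f := fun τ : Equiv.Perm (Fin n) => ∑ k, A k (τ k))
      (Set.Finite.bddAbove (Set.finite_range _)) σ
  have hMx : ∀ i, (M *ᵥ x) i = frobInner (P i) A := by
    intro i
    rw [hA, frobInner_sum_smul_right]
    simp [Matrix.mulVec, dotProduct, hM, mul_comm]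
  have hfs : frobSq A = ∑ i, x i * frobInner (P i) A := by
    have h1 : frobSq A = frobInner A A := by
      rw [frobInner_eq_sum, frobSq]
      exact Finset.sum_congr rfl fun i _ => Finset.sum_congr rfl fun j _ => (sq _)
    rw [h1]
    conv_lhs => rw [hA, frobInner_sum_smul_left]
    exact Finset.sum_congr rfl fun i _ => by rw [← hA]
  -- each frobInner (P i) A equals maxTr A
  have hmax : frobSq A = maxTr A := hErdos.2
  have key : ∀ i, frobInner (P i) A = maxTr A := by
    intro i
    by_contra hne
    have hlt : frobInner (P i) A < maxTr A := lt_of_le_of_ne (hle0 i) hne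
    have hstrict : ∑ j, x j * frobInner (P j) A < ∑ j, x j * maxTr A := by
      refine Finset.sum_lt_sum (fun j _ => ?_) ⟨i, Finset.mem_univ i, ?_⟩
      · exact mul_le_mul_of_nonneg_left (hle0 j) (hx j).le
      · exact (mul_lt_mul_iff_right₀ (hx i)).2 hlt
    rw [← hfs, hmax] at hstrict
    rw [← Finset.sum_mul, hsum, one_mul] at hstrict
    exact lt_irrefl _ hstrict
  have hdot : (M *ᵥ x) ⬝ᵥ x = maxTr A := by
    simp only [dotProduct]
    calc ∑ i, (M *ᵥ x) i * x i = ∑ i, maxTr A * x i := by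
          refine Finset.sum_congr rfl fun i _ => ?_
          rw [hMx i, key i]
      _ = maxTr A := by rw [← Finset.mul_sum, hsum, mul_one]
  funext j
  rw [hdot, hMx j, key j]
end

section
/- Every Erdős matrix has only rational entries: if A is an n × n bistochastic matrix with ‖A‖_F² = maxTr(A), then every entry A_{i,j} is a rational number. -/
open Matrix BigOperators
open Finset

lemma rat_solvable {k d : Type*} [Fintype k] [Fintype d] [DecidableEq d]
    (M : d → k → ℚ) (b : d → ℚ) (x : k → ℝ)
    (hx : ∀ i, ∑ j, (M i j : ℝ) * x j = (b i : ℝ)) :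
    ∃ y : k → ℚ, ∀ i, ∑ j, M i j * y j = b i := by
  classical
  by_cases hb : b ∈ Submodule.span ℚ (Set.range fun j => fun i => M i j)
  · rw [Submodule.mem_span_range_iff_exists_fun] at hb
    obtain ⟨y, hy⟩ := hb
    refine ⟨y, fun i => ?_⟩
    have := congrFun hy i
    simp only [Finset.sum_apply, Pi.smul_apply, smul_eq_mul] at this
    rw [← this]
    exact Finset.sum_congr rfl fun j _ => mul_comm _ _
  · exfalso
    set W := Submodule.span ℚ (Set.range fun j => fun i => M i j) with hW
    have hbq : (Submodule.Quotient.mk b : (d → ℚ) ⧸ W) ≠ 0 := by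
      simpa [Submodule.Quotient.mk_eq_zero] using hb
    obtain ⟨φ, hφ⟩ : ∃ φ : Module.Dual ℚ ((d → ℚ) ⧸ W), φ (Submodule.Quotient.mk b) ≠ 0 := by
      by_contra h
      push_neg at h
      exact hbq ((Module.forall_dual_apply_eq_zero_iff ℚ _).1 h)
    set ψ : (d → ℚ) →ₗ[ℚ] ℚ := φ.comp W.mkQ with hψdef
    have hψcol : ∀ j, ψ (fun i => M i j) = 0 := by
      intro j
      have hmem : (fun i => M i j) ∈ W := Submodule.subset_span ⟨j, rfl⟩
      have : W.mkQ (fun i => M i j) = 0 := (Submodule.Quotient.mk_eq_zero W).2 hmem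
      simp [hψdef, this]
    have hψb : ψ b ≠ 0 := hφ
    set c : d → ℚ := fun i => ψ (fun i' => if i = i' then 1 else 0) with hc
    have hψ : ∀ v : d → ℚ, ψ v = ∑ i, v i * c i := by
      intro v
      conv_lhs => rw [pi_eq_sum_univ v]
      rw [map_sum]
      exact Finset.sum_congr rfl fun i _ => by rw [_root_.map_smul]; simp [hc, smul_eq_mul]
    have h1 : ∑ i, (c i : ℝ) * (b i : ℝ) = 0 := by
      calc ∑ i, (c i : ℝ) * (b i : ℝ)
          = ∑ i, (c i : ℝ) * ∑ j, (M i j : ℝ) * x j :=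
            Finset.sum_congr rfl fun i _ => by rw [hx i]
        _ = ∑ j, (∑ i, (c i : ℝ) * (M i j : ℝ)) * x j := by
            simp_rw [Finset.mul_sum]
            rw [Finset.sum_comm]
            exact Finset.sum_congr rfl fun j _ => by
              rw [Finset.sum_mul]
              exact Finset.sum_congr rfl fun i _ => by ring
        _ = 0 := by
            refine Finset.sum_eq_zero fun j _ => ?_
            have h2 : ∑ i, M i j * c i = 0 := (hψ fun i => M i j).symm.trans (hψcol j)
            have h3 : ∑ i, (c i : ℝ) * (M i j : ℝ) = ((∑ i, M i j * c i : ℚ) : ℝ) := by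
              push_cast
              exact Finset.sum_congr rfl fun i _ => mul_comm _ _
            rw [h3, h2]
            simp
    have h4 : ((ψ b : ℚ) : ℝ) = ∑ i, (c i : ℝ) * (b i : ℝ) := by
      rw [hψ b]
      push_cast
      exact Finset.sum_congr rfl fun i _ => mul_comm _ _
    rw [h1] at h4
    exact hψb (by exact_mod_cast h4)

/-- Every Erdős matrix has only rational entries. -/
theorem erdos_rational_entries {n : ℕ} (A : Matrix (Fin n) (Fin n) ℝ)
    (hA : IsErdos A) : ∀ i j, ∃ q : ℚ, A i j = (q : ℝ) := by
  classical
  obtain ⟨⟨hpos, hrow, hcol⟩, hfm⟩ := hA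
  have hds : A ∈ doublyStochastic ℝ (Fin n) :=
    mem_doublyStochastic_iff_sum.2 ⟨hpos, hrow, hcol⟩
  obtain ⟨w, hw0, hw1, hwA⟩ := exists_eq_sum_perm_of_mem_doublyStochastic hds
  have hentry : ∀ i j, A i j = ∑ σ : Equiv.Perm (Fin n), w σ * (if σ i = j then (1:ℝ) else 0) := by
    intro i j
    have := congrFun (congrFun hwA i) j
    rw [← this]
    simp [Matrix.sum_apply, Equiv.Perm.permMatrix, PEquiv.toMatrix_apply, Equiv.toPEquiv_apply,
      Option.mem_def, eq_comm]
  set m := maxTr A with hm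
  set t : Equiv.Perm (Fin n) → ℝ := fun σ => ∑ i, A i (σ i) with htdef
  have hle : ∀ σ, t σ ≤ m := fun σ => le_ciSup (Finite.bddAbove_range _) σ
  set g : Equiv.Perm (Fin n) → Equiv.Perm (Fin n) → ℝ :=
    fun σ τ => ∑ i, if σ i = τ i then (1:ℝ) else 0 with hgdef
  -- pairing lemma
  have step1 : ∀ (i : Fin n) (u : Equiv.Perm (Fin n) → ℝ) (F : Fin n → ℝ),
      ∑ j, F j * (∑ τ : Equiv.Perm (Fin n), u τ * (if τ i = j then (1:ℝ) else 0))
        = ∑ τ : Equiv.Perm (Fin n), u τ * F (τ i) := by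
    intro i u F
    simp_rw [Finset.mul_sum]
    rw [Finset.sum_comm]
    refine Finset.sum_congr rfl fun τ _ => ?_
    have h : ∀ j, F j * (u τ * (if τ i = j then (1:ℝ) else 0))
        = if τ i = j then u τ * F j else 0 := by
      intro j; split <;> ring
    rw [Finset.sum_congr rfl fun j _ => h j, Finset.sum_ite_eq]
    simp
  have pair : ∀ v u : Equiv.Perm (Fin n) → ℝ,
      ∑ i, ∑ j, (∑ σ : Equiv.Perm (Fin n), v σ * (if σ i = j then (1:ℝ) else 0)) *
          (∑ τ : Equiv.Perm (Fin n), u τ * (if τ i = j then (1:ℝ) else 0))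
        = ∑ τ, u τ * ∑ σ, v σ * g σ τ := by
    intro v u
    have hi : ∀ i : Fin n,
        ∑ j, (∑ σ : Equiv.Perm (Fin n), v σ * (if σ i = j then (1:ℝ) else 0)) *
            (∑ τ : Equiv.Perm (Fin n), u τ * (if τ i = j then (1:ℝ) else 0))
          = ∑ τ : Equiv.Perm (Fin n), u τ * (∑ σ : Equiv.Perm (Fin n), v σ * (if σ i = τ i then (1:ℝ) else 0)) := by
      intro i
      rw [step1 i u (fun j => ∑ σ : Equiv.Perm (Fin n), v σ * (if σ i = j then (1:ℝ) else 0))]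
    rw [Finset.sum_congr rfl fun i _ => hi i, Finset.sum_comm]
    refine Finset.sum_congr rfl fun τ _ => ?_
    rw [← Finset.mul_sum]
    congr 1
    rw [Finset.sum_comm]
    simp only [hgdef]
    exact Finset.sum_congr rfl fun σ _ => (Finset.mul_sum _ _ _).symm
  have hgt : ∀ τ, ∑ σ, w σ * g σ τ = t τ := by
    intro τ
    simp only [hgdef, Finset.mul_sum]
    rw [Finset.sum_comm]
    exact Finset.sum_congr rfl fun i _ => (hentry i (τ i)).symm
  have hAAt : ∑ i, ∑ j, A i j * A i j = ∑ τ, w τ * t τ := by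
    calc ∑ i, ∑ j, A i j * A i j
        = ∑ i, ∑ j, (∑ σ : Equiv.Perm (Fin n), w σ * (if σ i = j then (1:ℝ) else 0)) *
            (∑ τ : Equiv.Perm (Fin n), w τ * (if τ i = j then (1:ℝ) else 0)) := by
          refine Finset.sum_congr rfl fun i _ => Finset.sum_congr rfl fun j _ => ?_
          rw [← hentry i j]
      _ = ∑ τ, w τ * ∑ σ, w σ * g σ τ := pair w w
      _ = ∑ τ, w τ * t τ := Finset.sum_congr rfl fun τ _ => by rw [hgt τ]
  have hfrob : frobSq A = ∑ i, ∑ j, A i j * A i j := by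
    simp [frobSq, sq]
  have hwt : ∑ τ, w τ * t τ = m := by rw [← hAAt, ← hfrob]; exact hfm
  have hsupp : ∀ σ, w σ ≠ 0 → t σ = m := by
    have h0 : ∑ σ, w σ * (m - t σ) = 0 := by
      simp only [mul_sub]
      rw [Finset.sum_sub_distrib, ← Finset.sum_mul, hw1, one_mul, hwt, sub_self]
    have hnn : ∀ σ ∈ Finset.univ, (0:ℝ) ≤ w σ * (m - t σ) :=
      fun σ _ => mul_nonneg (hw0 σ) (sub_nonneg.2 (hle σ))
    intro σ hσ
    have h1 := (Finset.sum_eq_zero_iff_of_nonneg hnn).1 h0 σ (Finset.mem_univ σ)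
    rcases mul_eq_zero.1 h1 with h | h
    · exact absurd h hσ
    · linarith
  -- rational Gram matrix
  set Gq : Equiv.Perm (Fin n) → Equiv.Perm (Fin n) → ℚ :=
    fun σ τ => ∑ i, if σ i = τ i then (1:ℚ) else 0 with hGq
  have hGcast : ∀ σ τ, ((Gq σ τ : ℚ) : ℝ) = g σ τ := by
    intro σ τ
    simp only [hGq, hgdef]
    push_cast
    exact Finset.sum_congr rfl fun i _ => by split <;> norm_num
  -- set up the rational linear system
  set Msys : (Equiv.Perm (Fin n) ⊕ Unit) → (Equiv.Perm (Fin n) ⊕ Unit) → ℚ := fun r s =>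
    match r, s with
    | .inl τ, .inl σ => if w τ ≠ 0 then Gq σ τ else (if σ = τ then 1 else 0)
    | .inl τ, .inr _ => if w τ ≠ 0 then -1 else 0
    | .inr _, .inl _ => 1
    | .inr _, .inr _ => 0
    with hMsys
  set bsys : (Equiv.Perm (Fin n) ⊕ Unit) → ℚ := fun r =>
    match r with
    | .inl _ => 0
    | .inr _ => 1
    with hbsys
  set xsys : (Equiv.Perm (Fin n) ⊕ Unit) → ℝ := fun s =>
    match s with
    | .inl σ => w σ
    | .inr _ => m
    with hxsys
  have hsol : ∀ r, ∑ s, (Msys r s : ℝ) * xsys s = (bsys r : ℝ) := by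
    intro r
    rw [Fintype.sum_sum_type]
    match r with
    | .inr _ =>
      simp only [hMsys, hbsys, hxsys]
      push_cast
      simp [hw1]
    | .inl τ =>
      by_cases hτ : w τ ≠ 0
      · simp only [hMsys, hbsys, hxsys, if_pos hτ]
        push_cast
        have : ∑ σ : Equiv.Perm (Fin n), (Gq σ τ : ℝ) * w σ = t τ := by
          rw [← hgt τ]
          exact Finset.sum_congr rfl fun σ _ => by rw [hGcast]; ring
        rw [this, hsupp τ hτ]
        simp
      · push_neg at hτ
        simp only [hMsys, hbsys, hxsys, if_neg (not_not.2 hτ)]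
        simp only [apply_ite (fun q : ℚ => (q : ℝ)), Rat.cast_one, Rat.cast_zero,
          ite_mul, one_mul, zero_mul]
        rw [Finset.sum_ite_eq' Finset.univ τ (fun σ => w σ)]
        simp [hτ]
  obtain ⟨y, hy⟩ := rat_solvable Msys bsys xsys hsol
  set μ : Equiv.Perm (Fin n) → ℚ := fun σ => y (.inl σ) with hμ
  set m' : ℚ := y (.inr ()) with hm'
  set c : Equiv.Perm (Fin n) → ℝ := fun σ => (μ σ : ℝ) with hcdef
  -- extract the equations
  have hc1 : ∑ σ, c σ = 1 := by
    have := hy (.inr ())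
    rw [Fintype.sum_sum_type] at this
    simp only [hMsys, hbsys, one_mul, zero_mul] at this
    have h2 : ∑ σ : Equiv.Perm (Fin n), μ σ = 1 := by simpa [hμ] using this
    simp only [hcdef]
    exact_mod_cast h2
  have hc0 : ∀ τ, w τ = 0 → c τ = 0 := by
    intro τ hτ
    have := hy (.inl τ)
    rw [Fintype.sum_sum_type] at this
    simp only [hMsys, hbsys, if_neg (not_not.2 hτ), ite_mul, one_mul, zero_mul] at this
    rw [Finset.sum_ite_eq' Finset.univ τ (fun σ => μ σ)] at this
    simp only [Finset.mem_univ, if_true] at this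
    have hμτ : μ τ = 0 := by simpa using this
    simp [hcdef, hμτ]
  have hcg : ∀ τ, w τ ≠ 0 → ∑ σ, c σ * g σ τ = (m' : ℝ) := by
    intro τ hτ
    have := hy (.inl τ)
    rw [Fintype.sum_sum_type] at this
    simp only [hMsys, hbsys, if_pos hτ] at this
    have h2 : ∑ σ : Equiv.Perm (Fin n), Gq σ τ * μ σ = m' := by
      have h3 : ∑ x : Unit, (-1 : ℚ) * y (Sum.inr x) = -m' := by simp [hm']
      rw [h3] at this
      linarith [this]
    have h4 : ((∑ σ : Equiv.Perm (Fin n), Gq σ τ * μ σ : ℚ) : ℝ) = ∑ σ, c σ * g σ τ := by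
      push_cast
      exact Finset.sum_congr rfl fun σ _ => by rw [← hGcast σ τ, hcdef]; ring
    rw [← h4, h2]
  -- the matrix built from the rational weights
  set B : Fin n → Fin n → ℝ :=
    fun i j => ∑ σ : Equiv.Perm (Fin n), c σ * (if σ i = j then (1:ℝ) else 0) with hB
  have hct : ∀ τ, c τ * t τ = c τ * m := by
    intro τ
    by_cases hτ : w τ = 0
    · rw [hc0 τ hτ]; ring
    · rw [hsupp τ hτ]
  have hAB : ∑ i, ∑ j, A i j * B i j = m := by
    calc ∑ i, ∑ j, A i j * B i j
        = ∑ i, ∑ j, (∑ σ : Equiv.Perm (Fin n), w σ * (if σ i = j then (1:ℝ) else 0)) *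
            (∑ τ : Equiv.Perm (Fin n), c τ * (if τ i = j then (1:ℝ) else 0)) := by
          refine Finset.sum_congr rfl fun i _ => Finset.sum_congr rfl fun j _ => ?_
          rw [← hentry i j]
      _ = ∑ τ, c τ * ∑ σ, w σ * g σ τ := pair w c
      _ = ∑ τ, c τ * m := Finset.sum_congr rfl fun τ _ => by rw [hgt τ, hct τ]
      _ = m := by rw [← Finset.sum_mul, hc1, one_mul]
  have hBA : ∑ i, ∑ j, B i j * A i j = (m' : ℝ) := by
    calc ∑ i, ∑ j, B i j * A i j
        = ∑ i, ∑ j, (∑ σ : Equiv.Perm (Fin n), c σ * (if σ i = j then (1:ℝ) else 0)) *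
            (∑ τ : Equiv.Perm (Fin n), w τ * (if τ i = j then (1:ℝ) else 0)) := by
          refine Finset.sum_congr rfl fun i _ => Finset.sum_congr rfl fun j _ => ?_
          rw [← hentry i j]
      _ = ∑ τ, w τ * ∑ σ, c σ * g σ τ := pair c w
      _ = ∑ τ, w τ * (m' : ℝ) := by
          refine Finset.sum_congr rfl fun τ _ => ?_
          by_cases hτ : w τ = 0
          · rw [hτ]; ring
          · rw [hcg τ hτ]
      _ = (m' : ℝ) := by rw [← Finset.sum_mul, hw1, one_mul]
  have hcomm : ∑ i, ∑ j, B i j * A i j = ∑ i, ∑ j, A i j * B i j :=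
    Finset.sum_congr rfl fun i _ => Finset.sum_congr rfl fun j _ => mul_comm _ _
  have hmm' : (m' : ℝ) = m := by rw [← hBA, hcomm, hAB]
  have hBB : ∑ i, ∑ j, B i j * B i j = m := by
    calc ∑ i, ∑ j, B i j * B i j
        = ∑ τ, c τ * ∑ σ, c σ * g σ τ := pair c c
      _ = ∑ τ, c τ * m := by
          refine Finset.sum_congr rfl fun τ _ => ?_
          by_cases hτ : w τ = 0
          · rw [hc0 τ hτ]; ring
          · rw [hcg τ hτ, hmm']
      _ = m := by rw [← Finset.sum_mul, hc1, one_mul]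
  have hzero : ∑ i, ∑ j, (A i j - B i j) ^ 2 = 0 := by
    have expand : ∀ i j : Fin n, (A i j - B i j) ^ 2
        = A i j * A i j - 2 * (A i j * B i j) + B i j * B i j := fun i j => by ring
    have e1 : ∀ i : Fin n, ∑ j, (A i j - B i j) ^ 2
        = (∑ j, A i j * A i j) - 2 * (∑ j, A i j * B i j) + ∑ j, B i j * B i j := by
      intro i
      rw [Finset.sum_congr rfl fun j _ => expand i j, Finset.sum_add_distrib,
        Finset.sum_sub_distrib, Finset.mul_sum]
    rw [Finset.sum_congr rfl fun i _ => e1 i, Finset.sum_add_distrib,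
      Finset.sum_sub_distrib, ← Finset.mul_sum, hAAt, hwt, hAB, hBB]
    ring
  have hABeq : ∀ i j, A i j = B i j := by
    intro i j
    have h := (Finset.sum_eq_zero_iff_of_nonneg
      (fun i _ => Finset.sum_nonneg fun j _ => sq_nonneg _)).1 hzero i (Finset.mem_univ i)
    have h2 := (Finset.sum_eq_zero_iff_of_nonneg
      (fun j _ => sq_nonneg (A i j - B i j))).1 h j (Finset.mem_univ j)
    have h3 := sq_eq_zero_iff.1 h2
    linarith
  intro i j
  refine ⟨∑ σ : Equiv.Perm (Fin n), μ σ * (if σ i = j then (1:ℚ) else 0), ?_⟩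
  rw [hABeq i j]
  simp only [hB, hcdef]
  push_cast
  exact Finset.sum_congr rfl fun σ _ => by
    simp [apply_ite (fun q : ℚ => (q : ℝ))]
end

section
/- For every n ≥ 1, the maximizer of Δ_n on the set of n × n bistochastic matrices is unique up to equivalence: an n × n bistochastic matrix A satisfies Δ_n(A) = (n-1)/4 if and only if A = P (½ I_n + ½ J_n) Q for some n × n permutation matrices P and Q, where I_n is the identity matrix and J_n is the n × n matrix all of whose entries equal 1/n. -/
open Matrix BigOperators

noncomputable def Delta {n : ℕ} (A : Matrix (Fin n) (Fin n) ℝ) : ℝ :=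
  maxTr A - frobSq A

/-! ### Auxiliary material -/

/-- The matrix equal to `½ I + ½ J` with columns permuted by `σ`. -/
noncomputable def Mmat (n : ℕ) (σ : Equiv.Perm (Fin n)) : Matrix (Fin n) (Fin n) ℝ :=
  Matrix.of fun i j => if j = σ i then ((n : ℝ) + 1) / (2 * n) else 1 / (2 * n)

lemma Mmat_apply {n : ℕ} (σ : Equiv.Perm (Fin n)) (i j : Fin n) :
    Mmat n σ i j = if j = σ i then ((n : ℝ) + 1) / (2 * n) else 1 / (2 * n) := rfl

/-- Per-row sum-of-squares identity. -/
lemma row_identity {n : ℕ} (hn : 1 ≤ n) (f : Fin n → ℝ) (hf : ∑ j, f j = 1) (k : Fin n) :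
    f k - ∑ j, f j ^ 2 = ((n : ℝ) - 1) / (4 * n)
      - (f k - ((n : ℝ) + 1) / (2 * n)) ^ 2
      - ∑ j ∈ Finset.univ.erase k, (f j - 1 / (2 * n)) ^ 2 := by
  have hc : (n : ℝ) ≠ 0 := by positivity
  have h1 : ∑ j ∈ Finset.univ.erase k, f j = 1 - f k := by
    rw [Finset.sum_erase_eq_sub (Finset.mem_univ k), hf]
  have h2 : ∑ j ∈ Finset.univ.erase k, f j ^ 2 = (∑ j, f j ^ 2) - f k ^ 2 :=
    Finset.sum_erase_eq_sub (Finset.mem_univ k)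
  have hcard : ((Finset.univ.erase k).card : ℝ) = (n : ℝ) - 1 := by
    rw [Finset.card_erase_of_mem (Finset.mem_univ k)]
    simp [Nat.cast_sub hn]
  have hterm : ∀ j, (f j - 1 / (2 * (n:ℝ))) ^ 2
      = f j ^ 2 - (1 / (n:ℝ)) * f j + (1 / (2 * (n:ℝ)))^2 := by
    intro j; field_simp; ring
  have hexp : ∑ j ∈ Finset.univ.erase k, (f j - 1 / (2 * n)) ^ 2
      = (∑ j ∈ Finset.univ.erase k, f j ^ 2)
        - (1 / (n:ℝ)) * (∑ j ∈ Finset.univ.erase k, f j)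
        + ((Finset.univ.erase k).card : ℝ) * (1 / (2 * n)) ^ 2 := by
    rw [Finset.sum_congr rfl fun j _ => hterm j, Finset.sum_add_distrib,
      Finset.sum_sub_distrib, Finset.sum_const, ← Finset.mul_sum, nsmul_eq_mul]
  rw [hexp, h1, h2, hcard]
  field_simp
  ring

/-- Global sum-of-squares identity for a row-stochastic matrix and a permutation. -/
lemma sum_identity {n : ℕ} (hn : 1 ≤ n) (A : Matrix (Fin n) (Fin n) ℝ)
    (hrow : ∀ i, ∑ j, A i j = 1) (σ : Equiv.Perm (Fin n)) :
    (∑ i, A i (σ i)) - frobSq A = ((n : ℝ) - 1) / 4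
      - ∑ i, ((A i (σ i) - ((n : ℝ) + 1) / (2 * n)) ^ 2
          + ∑ j ∈ Finset.univ.erase (σ i), (A i j - 1 / (2 * n)) ^ 2) := by
  have hc : (n : ℝ) ≠ 0 := by positivity
  have h : ∑ i, (A i (σ i) - ∑ j, A i j ^ 2)
      = ∑ i, (((n : ℝ) - 1) / (4 * n)
        - ((A i (σ i) - ((n : ℝ) + 1) / (2 * n)) ^ 2
          + ∑ j ∈ Finset.univ.erase (σ i), (A i j - 1 / (2 * n)) ^ 2)) := by
    refine Finset.sum_congr rfl fun i _ => ?_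
    rw [row_identity hn (A i) (hrow i) (σ i)]; ring
  rw [Finset.sum_sub_distrib] at h
  rw [Finset.sum_sub_distrib, Finset.sum_const, Finset.card_univ, Fintype.card_fin,
    nsmul_eq_mul] at h
  have hc4 : (n : ℝ) * (((n : ℝ) - 1) / (4 * n)) = ((n : ℝ) - 1) / 4 := by
    field_simp
  rw [hc4] at h
  unfold frobSq
  linarith

lemma Mmat_row {n : ℕ} (hn : 1 ≤ n) (σ : Equiv.Perm (Fin n)) (i : Fin n) :
    ∑ j, Mmat n σ i j = 1 := by
  have hc : (0:ℝ) < (n : ℝ) := by exact_mod_cast hn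
  rw [← Finset.add_sum_erase Finset.univ _ (Finset.mem_univ (σ i))]
  have h1 : Mmat n σ i (σ i) = ((n : ℝ) + 1) / (2 * n) := by simp [Mmat_apply]
  have hall : ∀ j ∈ Finset.univ.erase (σ i), Mmat n σ i j = 1 / (2 * (n:ℝ)) :=
    fun j hj => if_neg (Finset.ne_of_mem_erase hj)
  have h2 : ∑ j ∈ Finset.univ.erase (σ i), Mmat n σ i j
      = ((n:ℝ) - 1) * (1 / (2 * n)) := by
    rw [Finset.sum_congr rfl hall, Finset.sum_const, nsmul_eq_mul,
      Finset.card_erase_of_mem (Finset.mem_univ (σ i)), Finset.card_univ,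
      Fintype.card_fin, Nat.cast_sub hn]
    push_cast; ring
  rw [h1, h2]
  field_simp
  ring

lemma maxTr_eq {n : ℕ} (A : Matrix (Fin n) (Fin n) ℝ) (σ : Equiv.Perm (Fin n))
    (hσ : ∀ τ : Equiv.Perm (Fin n), ∑ i, A i (τ i) ≤ ∑ i, A i (σ i)) :
    maxTr A = ∑ i, A i (σ i) := by
  unfold maxTr
  exact le_antisymm (ciSup_le hσ)
    (le_ciSup (f := fun τ : Equiv.Perm (Fin n) => ∑ i, A i (τ i))
      (Set.Finite.bddAbove (Set.finite_range _)) σ)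

lemma exists_max {n : ℕ} (A : Matrix (Fin n) (Fin n) ℝ) :
    ∃ σ : Equiv.Perm (Fin n), ∀ τ : Equiv.Perm (Fin n),
      ∑ i, A i (τ i) ≤ ∑ i, A i (σ i) := by
  obtain ⟨σ, hσ⟩ := Finite.exists_max (fun τ : Equiv.Perm (Fin n) => ∑ i, A i (τ i))
  exact ⟨σ, hσ⟩

lemma Mmat_maxTr {n : ℕ} (hn : 1 ≤ n) (σ : Equiv.Perm (Fin n)) :
    maxTr (Mmat n σ) = ∑ i, Mmat n σ i (σ i) := by
  have hc : (0:ℝ) < (n : ℝ) := by exact_mod_cast hn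
  have h2n : (0:ℝ) < 2 * n := by positivity
  refine maxTr_eq _ σ fun τ => Finset.sum_le_sum fun i _ => ?_
  rw [Mmat_apply, Mmat_apply, if_pos rfl]
  split
  · exact le_refl _
  · exact (div_le_div_iff_of_pos_right h2n).mpr (by linarith)

lemma Mmat_delta {n : ℕ} (hn : 1 ≤ n) (σ : Equiv.Perm (Fin n)) :
    Delta (Mmat n σ) = ((n : ℝ) - 1) / 4 := by
  have hE : ∑ i, ((Mmat n σ i (σ i) - ((n : ℝ) + 1) / (2 * n)) ^ 2
      + ∑ j ∈ Finset.univ.erase (σ i), (Mmat n σ i j - 1 / (2 * n)) ^ 2) = 0 := by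
    refine Finset.sum_eq_zero fun i _ => ?_
    have h1 : Mmat n σ i (σ i) = ((n : ℝ) + 1) / (2 * n) := if_pos rfl
    have h2 : ∑ j ∈ Finset.univ.erase (σ i), (Mmat n σ i j - 1 / (2 * (n:ℝ))) ^ 2 = 0 := by
      refine Finset.sum_eq_zero fun j hj => ?_
      have : Mmat n σ i j = 1 / (2 * (n:ℝ)) := if_neg (Finset.ne_of_mem_erase hj)
      rw [this, sub_self]; ring
    rw [h1, h2, sub_self]; ring
  have hid := sum_identity hn (Mmat n σ) (Mmat_row hn σ) σ
  rw [hE, sub_zero] at hid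
  unfold Delta
  rw [Mmat_maxTr hn σ, hid]

lemma perm_mul_B {n : ℕ} (hn : 1 ≤ n) (τ ρ : Equiv.Perm (Fin n)) :
    (τ.permMatrix ℝ) * ((1 / 2 : ℝ) • (1 : Matrix (Fin n) (Fin n) ℝ) +
        (1 / 2 : ℝ) • Matrix.of (fun _ _ => (1 : ℝ) / n)) * (ρ.permMatrix ℝ)
      = Mmat n (τ.trans ρ) := by
  have hc : (n : ℝ) ≠ 0 := by positivity
  rw [Equiv.Perm.permMatrix, Equiv.Perm.permMatrix, PEquiv.toMatrix_toPEquiv_mul,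
    PEquiv.mul_toMatrix_toPEquiv]
  ext i j
  simp only [Matrix.submatrix_apply, id_eq, Matrix.add_apply, Matrix.smul_apply,
    Matrix.one_apply, Matrix.of_apply, smul_eq_mul, Mmat]
  have hiff : (τ i = ρ.symm j) ↔ (j = (τ.trans ρ) i) := by
    constructor
    · intro h; rw [Equiv.trans_apply, h]; simp
    · intro h; rw [Equiv.trans_apply] at h; simp [h]
  by_cases h : j = (τ.trans ρ) i
  · rw [if_pos (hiff.mpr h), if_pos h]
    field_simp
  · rw [if_neg (fun hh => h (hiff.mp hh)), if_neg h]
    ring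

/-- The maximizer of `Δ_n` on bistochastic matrices is `½ I_n + ½ J_n`, uniquely up to
pre- and post-multiplication by permutation matrices. -/
theorem delta_max_unique (n : ℕ) (hn : 1 ≤ n) (A : Matrix (Fin n) (Fin n) ℝ)
    (hA : IsBistochastic A) :
    Delta A = ((n : ℝ) - 1) / 4 ↔
      ∃ P Q : Matrix (Fin n) (Fin n) ℝ, IsPermMatrix P ∧ IsPermMatrix Q ∧
        A = P * ((1 / 2 : ℝ) • (1 : Matrix (Fin n) (Fin n) ℝ) +
          (1 / 2 : ℝ) • Matrix.of (fun _ _ => (1 : ℝ) / n)) * Q := by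
  constructor
  · intro hΔ
    obtain ⟨σ, hσ⟩ := exists_max A
    have hmax : maxTr A = ∑ i, A i (σ i) := maxTr_eq A σ hσ
    have hid := sum_identity hn A hA.2.1 σ
    have hE : ∑ i, ((A i (σ i) - ((n : ℝ) + 1) / (2 * n)) ^ 2
        + ∑ j ∈ Finset.univ.erase (σ i), (A i j - 1 / (2 * n)) ^ 2) = 0 := by
      have hΔ' : maxTr A - frobSq A = ((n : ℝ) - 1) / 4 := hΔ
      rw [hmax] at hΔ'
      linarith
    have hterm := (Finset.sum_eq_zero_iff_of_nonneg
      (fun i _ => by positivity)).mp hE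
    have hAM : A = Mmat n σ := by
      ext i j
      have hi := hterm i (Finset.mem_univ i)
      have hu2 : (0:ℝ) ≤ (A i (σ i) - ((n : ℝ) + 1) / (2 * n)) ^ 2 := by positivity
      have hS : (0:ℝ) ≤ ∑ j ∈ Finset.univ.erase (σ i), (A i j - 1 / (2 * (n:ℝ))) ^ 2 := by
        positivity
      have hu0 : (A i (σ i) - ((n : ℝ) + 1) / (2 * n)) ^ 2 = 0 := by linarith
      have hS0 : ∑ j ∈ Finset.univ.erase (σ i), (A i j - 1 / (2 * (n:ℝ))) ^ 2 = 0 := by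
        linarith
      rw [Mmat_apply]
      by_cases h : j = σ i
      · subst h
        rw [if_pos rfl]
        have := pow_eq_zero_iff (n := 2) (by norm_num) |>.mp hu0
        linarith [sub_eq_zero.mp this]
      · rw [if_neg h]
        have hj : j ∈ Finset.univ.erase (σ i) :=
          Finset.mem_erase.mpr ⟨h, Finset.mem_univ j⟩
        have := (Finset.sum_eq_zero_iff_of_nonneg
          (fun j _ => by positivity)).mp hS0 j hj
        have := pow_eq_zero_iff (n := 2) (by norm_num) |>.mp this
        linarith [sub_eq_zero.mp this]
    refine ⟨(1 : Equiv.Perm (Fin n)).permMatrix ℝ, σ.permMatrix ℝ, ⟨1, rfl⟩, ⟨σ, rfl⟩, ?_⟩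
    rw [perm_mul_B hn 1 σ, hAM]
    congr 1
  · rintro ⟨P, Q, ⟨τ, rfl⟩, ⟨ρ, rfl⟩, hAeq⟩
    rw [hAeq, perm_mul_B hn τ ρ, Mmat_delta hn (τ.trans ρ)]
end

section
/- Let n ∈ ℕ and let P be an n × n permutation matrix with d = Tr(P) fixed points. Then A = ½(I_n + P) is an Erdős matrix; in fact ‖A‖_F² = (n+d)/2 = maxTr(A). -/
open Matrix BigOperators

/-- If `P` is a permutation matrix with `d = Tr P` fixed points, then `A = ½(I + P)` is an
Erdős matrix, with `‖A‖_F² = (n + d)/2 = maxTr A`. -/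
theorem half_id_add_perm_is_erdos {n : ℕ} (P : Matrix (Fin n) (Fin n) ℝ)
    (hP : IsPermMatrix P) (d : ℝ) (hd : d = Matrix.trace P)
    (A : Matrix (Fin n) (Fin n) ℝ)
    (hA : A = (1 / 2 : ℝ) • ((1 : Matrix (Fin n) (Fin n) ℝ) + P)) :
    IsErdos A ∧ frobSq A = ((n : ℝ) + d) / 2 ∧ maxTr A = ((n : ℝ) + d) / 2 := by
  obtain ⟨σ, rfl⟩ := hP
  have hPentry : ∀ i j, σ.permMatrix ℝ i j = if σ i = j then 1 else 0 := by
    intro i j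
    simp [Equiv.Perm.permMatrix, PEquiv.toMatrix_apply, Equiv.toPEquiv_apply]
  have hAentry : ∀ i j, A i j =
      (1 / 2 : ℝ) * ((if i = j then 1 else 0) + (if σ i = j then 1 else 0)) := by
    intro i j
    rw [hA]
    simp only [Matrix.smul_apply, Matrix.add_apply, Matrix.one_apply, hPentry, smul_eq_mul]
  have hd' : d = ∑ i, (if σ i = i then (1:ℝ) else 0) := by
    rw [hd, Matrix.trace]
    exact Finset.sum_congr rfl (fun i _ => hPentry i i)
  have hsumconst : ∑ i : Fin n, (1/2 : ℝ) = (n : ℝ) / 2 := by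
    rw [Finset.sum_const, Finset.card_univ]
    simp [nsmul_eq_mul]
    ring
  have hdsum : ∑ i : Fin n, (if σ i = i then (1:ℝ) else 0) / 2 = d / 2 := by
    rw [← Finset.sum_div, ← hd']
  -- nonnegativity
  have hnonneg : ∀ i j, 0 ≤ A i j := by
    intro i j
    rw [hAentry]
    positivity
  -- row sums
  have hrow : ∀ i, ∑ j, A i j = 1 := by
    intro i
    simp only [hAentry, ← Finset.mul_sum, Finset.sum_add_distrib]
    rw [Finset.sum_ite_eq (Finset.univ) i (fun _ => (1:ℝ)),
      Finset.sum_ite_eq (Finset.univ) (σ i) (fun _ => (1:ℝ))]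
    norm_num
  -- column sums
  have hcol : ∀ j, ∑ i, A i j = 1 := by
    intro j
    have h1 : ∑ i, (if i = j then (1:ℝ) else 0) = 1 := by
      rw [Finset.sum_ite_eq' (Finset.univ) j (fun _ => (1:ℝ))]; simp
    have h2 : ∑ i, (if σ i = j then (1:ℝ) else 0) = 1 := by
      have hiff : ∀ i : Fin n, (σ i = j) ↔ (i = σ.symm j) := by
        intro i
        constructor
        · intro h; rw [← h]; simp
        · intro h; rw [h]; simp
      simp only [hiff]
      rw [Finset.sum_ite_eq' (Finset.univ) (σ.symm j) (fun _ => (1:ℝ))]; simp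
    simp only [hAentry, ← Finset.mul_sum, Finset.sum_add_distrib, h1, h2]
    norm_num
  -- row-wise value of frobSq
  have hrowsq : ∀ i, ∑ j, (A i j) ^ 2 =
      1/2 + (if σ i = i then (1:ℝ) else 0) / 2 := by
    intro i
    by_cases h : σ i = i
    · have key : ∀ j, (A i j)^2 = if i = j then (1:ℝ) else 0 := by
        intro j
        rw [hAentry]
        by_cases h1 : i = j
        · have h2 : σ i = j := by rw [h, h1]
          rw [if_pos h1, if_pos h2]
          norm_num
        · have h2 : σ i ≠ j := by rw [h]; exact h1
          rw [if_neg h1, if_neg h2]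
          norm_num
      rw [Finset.sum_congr rfl (fun j _ => key j),
        Finset.sum_ite_eq (Finset.univ) i (fun _ => (1:ℝ))]
      simp only [Finset.mem_univ, if_true, if_pos h]
      norm_num
    · have key : ∀ j, (A i j)^2 =
          (1/4:ℝ) * ((if i = j then 1 else 0) + (if σ i = j then 1 else 0)) := by
        intro j
        rw [hAentry]
        by_cases h1 : i = j
        · have h2 : σ i ≠ j := by rw [← h1]; exact h
          rw [if_pos h1, if_neg h2]
          norm_num
        · by_cases h2 : σ i = j
          · rw [if_neg h1, if_pos h2]
            norm_num
          · rw [if_neg h1, if_neg h2]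
            norm_num
      rw [Finset.sum_congr rfl (fun j _ => key j), ← Finset.mul_sum, Finset.sum_add_distrib,
        Finset.sum_ite_eq (Finset.univ) i (fun _ => (1:ℝ)),
        Finset.sum_ite_eq (Finset.univ) (σ i) (fun _ => (1:ℝ))]
      simp only [Finset.mem_univ, if_true, if_neg h]
      norm_num
  have hfrob : frobSq A = ((n : ℝ) + d) / 2 := by
    unfold frobSq
    rw [Finset.sum_congr rfl (fun i _ => hrowsq i), Finset.sum_add_distrib,
      hdsum, hsumconst]
    ring
  -- upper bound on each permutation trace
  have hub : ∀ τ : Equiv.Perm (Fin n), ∑ i, A i (τ i) ≤ ((n : ℝ) + d) / 2 := by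
    intro τ
    have hle : ∀ i, A i (τ i) ≤ 1/2 + (if σ i = i then (1:ℝ) else 0) / 2 := by
      intro i
      rw [hAentry]
      by_cases h : σ i = i
      · rw [if_pos h, h]
        by_cases h1 : i = τ i
        · simp only [if_pos h1]; norm_num
        · simp only [if_neg h1]; norm_num
      · rw [if_neg h]
        by_cases h1 : i = τ i
        · have h2 : σ i ≠ τ i := fun hc => h (hc.trans h1.symm)
          simp only [if_pos h1, if_neg h2]
          norm_num
        · by_cases h2 : σ i = τ i
          · simp only [if_neg h1, if_pos h2]; norm_num
          · simp only [if_neg h1, if_neg h2]; norm_num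
    calc ∑ i, A i (τ i) ≤ ∑ i, (1/2 + (if σ i = i then (1:ℝ) else 0) / 2) :=
          Finset.sum_le_sum (fun i _ => hle i)
      _ = ((n : ℝ) + d) / 2 := by
          rw [Finset.sum_add_distrib, hdsum, hsumconst]
          ring
  -- identity achieves the bound
  have hid : ∑ i, A i ((1 : Equiv.Perm (Fin n)) i) = ((n : ℝ) + d) / 2 := by
    have key : ∀ i, A i ((1 : Equiv.Perm (Fin n)) i)
        = 1/2 + (if σ i = i then (1:ℝ) else 0) / 2 := by
      intro i
      show A i i = _
      rw [hAentry, if_pos rfl]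
      by_cases h : σ i = i
      · rw [if_pos h]; norm_num
      · rw [if_neg h]; norm_num
    rw [Finset.sum_congr rfl (fun i _ => key i), Finset.sum_add_distrib,
      hdsum, hsumconst]
    ring
  have hmax : maxTr A = ((n : ℝ) + d) / 2 := by
    unfold maxTr
    apply le_antisymm
    · exact ciSup_le hub
    · rw [← hid]
      exact le_ciSup (f := fun τ : Equiv.Perm (Fin n) => ∑ i, A i (τ i))
        (Set.Finite.bddAbove (Set.finite_range _)) 1
  exact ⟨⟨⟨hnonneg, hrow, hcol⟩, by rw [hfrob, hmax]⟩, hfrob, hmax⟩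
end

section
/- For every n ≥ 1, the number of equivalence classes of n × n Erdős matrices is at least p(n), the number of integer partitions of n: there exist at least p(n) n × n Erdős matrices that are pairwise non-equivalent. -/
open Matrix BigOperators

/-- `A` and `B` are equivalent if `A = P B Q` for some permutation matrices `P, Q`. -/
def MatEquiv {n : ℕ} (A B : Matrix (Fin n) (Fin n) ℝ) : Prop :=
  ∃ P Q : Matrix (Fin n) (Fin n) ℝ, IsPermMatrix P ∧ IsPermMatrix Q ∧ A = P * B * Q

/-! For a partition `λ` of `n`, cut `Fin n` into blocks of sizes `λₖ` and let `A` be the block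
diagonal matrix whose block of size `k` has all entries `1 / k`, i.e. the orthogonal projection onto
the vectors that are constant on blocks. Every row of `A` has squared norm equal to its diagonal
entry, and the diagonal entry is the largest of the row, so `‖A‖_F² = tr A = maxTr A`. Permuting
rows and columns does not change how often a value occurs among the entries, and `1 / m` occurs
`m² · (multiplicity of m in λ)` times in `A`; so distinct partitions give inequivalent matrices. -/

open Finset

section BlockAverage

variable {α β : Type*} [Fintype α] [DecidableEq β] (c : α → β)

def blockSize (i : α) : ℕ := #{j | c j = c i}

noncomputable def blockAvg : Matrix α α ℝ :=
  fun i j => if c j = c i then (blockSize c i : ℝ)⁻¹ else 0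

variable {c}

lemma blockSize_pos (i : α) : 0 < blockSize c i :=
  card_pos.mpr ⟨i, mem_filter.mpr ⟨mem_univ i, rfl⟩⟩

lemma blockSize_congr {i j : α} (h : c i = c j) : blockSize c i = blockSize c j := by
  simp only [blockSize, h]

lemma blockAvg_comm (i j : α) : blockAvg c i j = blockAvg c j i := by
  by_cases h : c j = c i
  · simp [blockAvg, h, blockSize_congr h]
  · simp [blockAvg, h, Ne.symm h]

lemma blockAvg_nonneg (i j : α) : 0 ≤ blockAvg c i j := by
  unfold blockAvg
  split_ifs <;> positivity

lemma blockAvg_diag (i : α) : blockAvg c i i = (blockSize c i : ℝ)⁻¹ := if_pos rfl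

lemma blockAvg_le_diag (i j : α) : blockAvg c i j ≤ blockAvg c i i := by
  rw [blockAvg_diag]
  unfold blockAvg
  split_ifs
  · exact le_rfl
  · positivity

lemma sum_ite_eq_blockSize_mul (i : α) (x : ℝ) :
    ∑ j, (if c j = c i then x else 0) = blockSize c i * x := by
  rw [← sum_filter, sum_const, nsmul_eq_mul, blockSize]

lemma sum_blockAvg_row (i : α) : ∑ j, blockAvg c i j = 1 := by
  have : (blockSize c i : ℝ) ≠ 0 := by exact_mod_cast (blockSize_pos i).ne'
  unfold blockAvg
  rw [sum_ite_eq_blockSize_mul, mul_inv_cancel₀ this]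

lemma sum_blockAvg_col (j : α) : ∑ i, blockAvg c i j = 1 := by
  simpa only [blockAvg_comm _ j] using sum_blockAvg_row (c := c) j

lemma sum_sq_blockAvg_row (i : α) : ∑ j, blockAvg c i j ^ 2 = blockAvg c i i := by
  have : (blockSize c i : ℝ) ≠ 0 := by exact_mod_cast (blockSize_pos i).ne'
  rw [blockAvg_diag]
  simp only [blockAvg, ite_pow, zero_pow two_ne_zero]
  rw [sum_ite_eq_blockSize_mul]
  field_simp

lemma blockAvg_eq_inv_iff {m : ℕ} (hm : 0 < m) (i j : α) :
    blockAvg c i j = (m : ℝ)⁻¹ ↔ c j = c i ∧ blockSize c i = m := by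
  have : (m : ℝ)⁻¹ ≠ 0 := by positivity
  unfold blockAvg
  split_ifs with h
  · simp [h]
  · simp [h, this.symm]

lemma card_blockAvg_eq_inv {m : ℕ} (hm : 0 < m) :
    #{p : α × α | blockAvg c p.1 p.2 = (m : ℝ)⁻¹} = m * #{i | blockSize c i = m} := by
  calc #{p : α × α | blockAvg c p.1 p.2 = (m : ℝ)⁻¹}
      = ∑ i, #{j | c j = c i ∧ blockSize c i = m} := by
        simp only [blockAvg_eq_inv_iff hm, card_filter, Fintype.sum_prod_type]
    _ = ∑ i with blockSize c i = m, blockSize c i := by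
        rw [sum_filter]
        refine sum_congr rfl fun i _ => ?_
        split_ifs with h
        · simp only [h, and_true]
          exact h
        · simp [h]
    _ = m * #{i | blockSize c i = m} := by
        rw [sum_const_nat fun i hi => (mem_filter.1 hi).2, mul_comm]

lemma card_blockSize_eq [Fintype β] (m : ℕ) :
    #{i | blockSize c i = m} = m * #{b | #{i | c i = b} = m} := by
  rw [card_eq_sum_card_fiberwise (f := c) (s := {i | blockSize c i = m})
    (t := {b | #{i | c i = b} = m}) fun i hi => mem_filter.2 ⟨mem_univ _, (mem_filter.1 hi).2⟩,
    mul_comm]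
  refine sum_const_nat fun b hb => ?_
  rw [← (mem_filter.1 hb).2, filter_filter]
  congr 1
  ext i
  simp only [mem_filter, mem_univ, true_and, and_iff_right_iff_imp]
  rintro rfl
  rfl

end BlockAverage

lemma maxTr_eq_trace_of_le_diag {n : ℕ} {A : Matrix (Fin n) (Fin n) ℝ}
    (h : ∀ i j, A i j ≤ A i i) : maxTr A = A.trace :=
  le_antisymm (ciSup_le fun σ => sum_le_sum fun i _ => h i (σ i))
    (le_ciSup (f := fun σ : Equiv.Perm (Fin n) => ∑ i, A i (σ i)) (Finite.bddAbove_range _) 1)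

lemma isErdos_blockAvg {n : ℕ} {β : Type*} [DecidableEq β] (c : Fin n → β) :
    IsErdos (blockAvg c) :=
  ⟨⟨blockAvg_nonneg, sum_blockAvg_row, sum_blockAvg_col⟩,
    (sum_congr rfl fun i _ => sum_sq_blockAvg_row i).trans
      (maxTr_eq_trace_of_le_diag blockAvg_le_diag).symm⟩

lemma card_eq_of_matEquiv {n : ℕ} {A B : Matrix (Fin n) (Fin n) ℝ} (h : MatEquiv A B) (x : ℝ) :
    #{p : Fin n × Fin n | A p.1 p.2 = x} = #{p : Fin n × Fin n | B p.1 p.2 = x} := by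
  obtain ⟨_, _, ⟨σ, rfl⟩, ⟨τ, rfl⟩, rfl⟩ := h
  rw [Matrix.mul_assoc, PEquiv.toMatrix_toPEquiv_mul, PEquiv.mul_toMatrix_toPEquiv]
  refine card_equiv (σ.prodCongr τ.symm) fun p => ?_
  simp only [mem_filter, mem_univ, true_and]
  rfl

instance {α : Type*} [DecidableEq α] (m : Multiset α) : DecidableEq m :=
  inferInstanceAs (DecidableEq ((x : α) × Fin (m.count x)))

section Partition

variable {n : ℕ} (P : n.Partition)

lemma card_sigma_parts : Fintype.card (Σ k : P.parts, Fin k) = n := by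
  simp [Fintype.card_sigma, ← Multiset.sum_eq_sum_coe, P.parts_sum]

noncomputable def partitionEquiv : Fin n ≃ Σ k : P.parts, Fin k :=
  Fintype.equivOfCardEq ((Fintype.card_fin n).trans (card_sigma_parts P).symm)

noncomputable def partitionBlock (i : Fin n) : P.parts := (partitionEquiv P i).1

lemma card_partitionBlock_fiber (k : P.parts) : #{i | partitionBlock P i = k} = k := by
  rw [card_equiv (partitionEquiv P) (t := {x | x.1 = k}) fun i => by
      simp only [mem_filter, mem_univ, true_and]
      rfl,
    ← Fintype.card_subtype, Fintype.card_congr (Equiv.sigmaSubtype k), Fintype.card_fin]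

lemma card_blockSize_partitionBlock_eq (m : ℕ) :
    #{i | blockSize (partitionBlock P) i = m} = m * P.parts.count m := by
  rw [card_blockSize_eq]
  simp only [card_partitionBlock_fiber]
  have hcount := congrArg (Multiset.count m) (Multiset.map_univ_coe P.parts)
  rw [Multiset.count_map] at hcount
  rw [← hcount, card_def, filter_val]
  simp only [eq_comm (a := m)]

lemma eq_of_matEquiv_blockAvg_partitionBlock {P Q : n.Partition}
    (h : MatEquiv (blockAvg (partitionBlock P)) (blockAvg (partitionBlock Q))) : P = Q := by
  refine Nat.Partition.ext (Multiset.ext.2 fun m => ?_)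
  rcases Nat.eq_zero_or_pos m with rfl | hm
  · rw [Multiset.count_eq_zero_of_notMem fun h0 => (P.parts_pos h0).ne rfl,
      Multiset.count_eq_zero_of_notMem fun h0 => (Q.parts_pos h0).ne rfl]
  · have := card_eq_of_matEquiv h (m : ℝ)⁻¹
    rw [card_blockAvg_eq_inv hm, card_blockAvg_eq_inv hm, card_blockSize_partitionBlock_eq,
      card_blockSize_partitionBlock_eq] at this
    exact Nat.eq_of_mul_eq_mul_left hm (Nat.eq_of_mul_eq_mul_left hm this)

end Partition

theorem erdos_count_lower_bound_general (n : ℕ) :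
    ∃ f : Fin (Fintype.card (Nat.Partition n)) → Matrix (Fin n) (Fin n) ℝ,
      (∀ i, IsErdos (f i)) ∧ ∀ i j, i ≠ j → ¬ MatEquiv (f i) (f j) := by
  let e := (Fintype.equivFin (Nat.Partition n)).symm
  exact ⟨fun i => blockAvg (partitionBlock (e i)), fun i => isErdos_blockAvg _,
    fun i j hij h => hij (e.injective (eq_of_matEquiv_blockAvg_partitionBlock h))⟩

/-- For every `n ≥ 1` there are at least `p(n)` pairwise non-equivalent `n × n`
Erdős matrices, where `p(n)` is the number of partitions of `n`. -/
theorem erdos_count_lower_bound (n : ℕ) (hn : 1 ≤ n) :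
    ∃ f : Fin (Fintype.card (Nat.Partition n)) → Matrix (Fin n) (Fin n) ℝ,
      (∀ i, IsErdos (f i)) ∧ ∀ i j, i ≠ j → ¬ MatEquiv (f i) (f j) :=
  erdos_count_lower_bound_general n
end

section
/- A 2 × 2 bistochastic matrix A is an Erdős matrix if and only if A is one of the following three matrices: the identity matrix [[1,0],[0,1]], the matrix [[1/2,1/2],[1/2,1/2]], or the swap matrix [[0,1],[1,0]]. -/
open Matrix BigOperators

/-! A `2 × 2` bistochastic matrix is `!![a, 1 - a; 1 - a, a]` with `a ∈ [0, 1]`, so the Erdős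
condition reduces to `a² + (1 - a)² = max a (1 - a)`. The difference of the two sides factors as
`a (2a - 1)` for `a ≤ ½` and as `(a - 1)(2a - 1)` for `a ≥ ½`, leaving exactly `a = 0, ½, 1`. -/

theorem Equiv.Perm.fin_two_eq_one_or_swap (σ : Equiv.Perm (Fin 2)) :
    σ = 1 ∨ σ = Equiv.swap 0 1 := by
  revert σ; decide

theorem maxTr_fin_two (A : Matrix (Fin 2) (Fin 2) ℝ) :
    maxTr A = max (A 0 0 + A 1 1) (A 0 1 + A 1 0) := by
  have hbdd : BddAbove (Set.range fun σ : Equiv.Perm (Fin 2) => ∑ i, A i (σ i)) :=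
    (Set.finite_range _).bddAbove
  refine le_antisymm (ciSup_le fun σ => ?_) (max_le ?_ ?_)
  · rcases σ.fin_two_eq_one_or_swap with rfl | rfl <;> simp [Fin.sum_univ_two]
  · simpa [maxTr, Fin.sum_univ_two] using le_ciSup hbdd 1
  · simpa [maxTr, Fin.sum_univ_two] using le_ciSup hbdd (Equiv.swap 0 1)

theorem IsBistochastic.exists_eq_fin_two {A : Matrix (Fin 2) (Fin 2) ℝ} (hA : IsBistochastic A) :
    ∃ a ∈ Set.Icc (0 : ℝ) 1, A = !![a, 1 - a; 1 - a, a] := by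
  obtain ⟨hnonneg, hrow, hcol⟩ := hA
  have hrow0 := hrow 0
  have hrow1 := hrow 1
  have hcol0 := hcol 0
  simp only [Fin.sum_univ_two] at hrow0 hrow1 hcol0
  refine ⟨A 0 0, ⟨hnonneg 0 0, by linarith [hnonneg 0 1]⟩, ?_⟩
  ext i j
  fin_cases i <;> fin_cases j <;> simp <;> linarith

theorem frobSq_fin_two_doublyStochastic (a : ℝ) :
    frobSq !![a, 1 - a; 1 - a, a] = 2 * (a ^ 2 + (1 - a) ^ 2) := by
  simp [frobSq, Fin.sum_univ_two]; ring

theorem maxTr_fin_two_doublyStochastic (a : ℝ) :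
    maxTr !![a, 1 - a; 1 - a, a] = 2 * max a (1 - a) := by
  simp [maxTr_fin_two, ← two_mul, mul_max_of_nonneg]

theorem sq_add_one_sub_sq_eq_max_iff {a : ℝ} (ha : a ∈ Set.Icc (0 : ℝ) 1) :
    a ^ 2 + (1 - a) ^ 2 = max a (1 - a) ↔ a = 1 ∨ a = 1 / 2 ∨ a = 0 := by
  refine ⟨fun h => ?_, by rintro (rfl | rfl | rfl) <;> norm_num⟩
  rcases le_total a (1 / 2) with hle | hle
  · rw [max_eq_right (by linarith)] at h
    have : a * (2 * a - 1) = 0 := by linear_combination h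
    rcases mul_eq_zero.1 this with h | h
    · exact Or.inr (Or.inr h)
    · exact Or.inr (Or.inl (by linarith))
  · rw [max_eq_left (by linarith)] at h
    have : (a - 1) * (2 * a - 1) = 0 := by linear_combination h
    rcases mul_eq_zero.1 this with h | h
    · exact Or.inl (by linarith)
    · exact Or.inr (Or.inl (by linarith))

/-- A `2 × 2` bistochastic matrix is Erdős iff it is the identity, the all-`½` matrix,
or the swap matrix. -/
theorem erdos_two_by_two (A : Matrix (Fin 2) (Fin 2) ℝ) (hA : IsBistochastic A) :
    IsErdos A ↔
      A = !![1, 0; 0, 1] ∨ A = !![1/2, 1/2; 1/2, 1/2] ∨ A = !![0, 1; 1, 0] := by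
  obtain ⟨a, ha, rfl⟩ := hA.exists_eq_fin_two
  rw [IsErdos, and_iff_right hA, frobSq_fin_two_doublyStochastic, maxTr_fin_two_doublyStochastic,
    mul_right_inj' two_ne_zero, sq_add_one_sub_sq_eq_max_iff ha]
  simp only [EmbeddingLike.apply_eq_iff_eq, vecCons_inj, and_true]
  grind
end
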